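/- For real x ≥ 1, Li₂(−x) = −π²/6 − (1/2)(log x)² + ε for some real ε with |ε| ≤ π²/(6x). -/

import Mathlib

open Complex

/-- The principal branch of the dilogarithm, `Li₂(z) = -∫₀^z log(1-u)/u du`
integrated along the straight line from `0` to `z`. -/
noncomputable def dilog (z : ℂ) : ℂ :=
  -∫ t in (0:ℝ)..1, Complex.log (1 - (t : ℂ) * z) / (t : ℂ)

/-!
Substituting `u = t x` gives `Li₂(-x) = -∫₀ˣ log(1+u)/u du`. Since
`log(1+u) = log u + log(1+1/u)`, the integral over `[1, x]` is `(log x)²/2` plus, after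
`u ↦ 1/u`, the integral over `[1/x, 1]`. With `∫₀¹ log(1+u)/u du = π²/12` (integrate the power
series termwise) this gives `∫₀ˣ = π²/6 + (log x)²/2 - ∫₀^{1/x}`, and the remainder
`ε = ∫₀^{1/x} log(1+u)/u du` lies in `[0, 1/x]` because `0 ≤ log(1+u)/u ≤ 1`.
-/

open Real MeasureTheory intervalIntegral Set

-- At `u = 0` this is `0`, not the limit `1`; only integrals of it are used.
noncomputable def logOneAddDiv (u : ℝ) : ℝ := Real.log (1 + u) / u

lemma logOneAddDiv_nonneg {u : ℝ} (hu : 0 ≤ u) : 0 ≤ logOneAddDiv u :=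
  div_nonneg (Real.log_nonneg (by linarith)) hu

lemma logOneAddDiv_le_one {u : ℝ} (hu : 0 ≤ u) : logOneAddDiv u ≤ 1 := by
  rcases hu.eq_or_lt with rfl | hu
  · simp [logOneAddDiv]
  · rw [logOneAddDiv, div_le_one hu]
    linarith [Real.log_le_sub_one_of_pos (show 0 < 1 + u by linarith)]

lemma continuousOn_logOneAddDiv : ContinuousOn logOneAddDiv (Ioi 0) := fun u (hu : 0 < u) =>
  ((continuousAt_const.add continuousAt_id).log (by simp; linarith)).div continuousAt_id
    hu.ne' |>.continuousWithinAt

lemma intervalIntegrable_logOneAddDiv {a b : ℝ} (ha : 0 ≤ a) (hb : 0 ≤ b) :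
    IntervalIntegrable logOneAddDiv volume a b := by
  have hmeas : Measurable logOneAddDiv := by unfold logOneAddDiv; fun_prop
  refine (intervalIntegrable_const (c := (1 : ℝ))).mono_fun hmeas.aestronglyMeasurable ?_
  filter_upwards [ae_restrict_mem measurableSet_uIoc] with u hu
  have hu0 : 0 ≤ u := (le_min ha hb).trans hu.1.le
  simpa [abs_of_nonneg (logOneAddDiv_nonneg hu0)] using logOneAddDiv_le_one hu0

lemma integral_logOneAddDiv_nonneg {a : ℝ} (ha : 0 ≤ a) : 0 ≤ ∫ u in (0:ℝ)..a, logOneAddDiv u :=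
  integral_nonneg ha fun _ hu => logOneAddDiv_nonneg hu.1

lemma integral_logOneAddDiv_le {a : ℝ} (ha : 0 ≤ a) : ∫ u in (0:ℝ)..a, logOneAddDiv u ≤ a := by
  simpa using integral_mono_on ha (intervalIntegrable_logOneAddDiv le_rfl ha)
    intervalIntegrable_const fun u hu => logOneAddDiv_le_one hu.1

lemma hasSum_neg_one_pow_div_succ_sq :
    HasSum (fun n : ℕ => (-1:ℝ) ^ n / ((n:ℝ) + 1) ^ 2) (π ^ 2 / 12) := by
  -- The even-index part of `ζ(2)` is `ζ(2)/4`, so the odd-index part is `3ζ(2)/4 = π²/8`.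
  set f : ℕ → ℝ := fun n => 1 / (n:ℝ) ^ 2 with hf
  have hζ : HasSum f (π ^ 2 / 6) := hasSum_zeta_two
  have hsucc : HasSum (fun k => f (k + 1)) (π ^ 2 / 6) := by
    simpa [hf] using (hasSum_nat_add_iff' 1).2 hζ
  have heven : HasSum (fun k => f (2 * k)) (π ^ 2 / 24) := by
    rw [show π ^ 2 / 24 = π ^ 2 / 6 / 4 by ring]
    exact (hζ.div_const 4).congr_fun fun k => by simp only [hf]; push_cast; ring
  have hodd : HasSum (fun k => f (2 * k + 1)) (π ^ 2 / 8) := by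
    have hs : Summable (fun k => f (2 * k + 1)) :=
      hζ.summable.comp_injective fun a b h => by simpa using h
    convert hs.hasSum using 1
    linarith [hζ.unique (heven.even_add_odd hs.hasSum)]
  have hodd' : HasSum (fun k => -(f (k + 1) / 4)) (-(π ^ 2 / 24)) := by
    rw [show π ^ 2 / 24 = π ^ 2 / 6 / 4 by ring]
    exact (hsucc.div_const 4).neg
  rw [show π ^ 2 / 12 = π ^ 2 / 8 + -(π ^ 2 / 24) by ring]
  refine HasSum.even_add_odd (hodd.congr_fun fun k => ?_) (hodd'.congr_fun fun k => ?_)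
  · simp [hf, pow_mul]
  · simp only [hf]; push_cast; rw [pow_succ, pow_mul]; field_simp; ring

lemma hasSum_logOneAddDiv {u : ℝ} (h0 : u ≠ 0) (h1 : |u| < 1) :
    HasSum (fun n : ℕ => (-1:ℝ) ^ n * u ^ n / ((n:ℝ) + 1)) (logOneAddDiv u) := by
  have h := (hasSum_pow_div_log_of_abs_lt_one (x := -u) (by rwa [abs_neg])).div_const (-u)
  rw [sub_neg_eq_add, neg_div_neg_eq] at h
  refine h.congr_fun fun n => ?_
  rw [neg_pow, pow_succ]
  field_simp
  ring

lemma integral_logOneAddDiv_zero_one : ∫ u in (0:ℝ)..1, logOneAddDiv u = π ^ 2 / 12 := by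
  set F : ℕ → ℝ → ℝ := fun n u => (-1:ℝ) ^ n * (u ^ n / ((n:ℝ) + 1)) with hF
  have hterm : ∀ n : ℕ, ∫ u in Ioc (0:ℝ) 1, u ^ n / ((n:ℝ) + 1) = 1 / ((n:ℝ) + 1) ^ 2 :=
    fun n => by
      rw [← integral_of_le zero_le_one, intervalIntegral.integral_div, integral_pow]
      field_simp
      simp
  have hint : ∀ n, ∫ u in Ioc (0:ℝ) 1, F n u = (-1:ℝ) ^ n * (1 / ((n:ℝ) + 1) ^ 2) := fun n => by
    rw [MeasureTheory.integral_const_mul, hterm]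
  have hnorm : ∀ n, ∫ u in Ioc (0:ℝ) 1, ‖F n u‖ = 1 / ((n:ℝ) + 1) ^ 2 := fun n => by
    rw [← hterm]
    refine setIntegral_congr_fun measurableSet_Ioc fun u hu => ?_
    simp [hF, abs_of_nonneg hu.1.le, abs_of_pos (n.cast_add_one_pos (α := ℝ))]
  have key := hasSum_integral_of_summable_integral_norm (μ := volume.restrict (Ioc 0 1))
    (fun n => (show Continuous (F n) by fun_prop).integrableOn_Ioc) (by
      simp only [hnorm]
      simpa using (summable_nat_add_iff 1).2 (Real.summable_one_div_nat_pow.2 one_lt_two))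
  rw [integral_of_le zero_le_one, hasSum_neg_one_pow_div_succ_sq.unique
    (key.congr_fun fun n => by rw [hint]; ring)]
  refine setIntegral_congr_ae measurableSet_Ioc ?_
  filter_upwards [compl_mem_ae_iff.2 (Real.volume_singleton (a := 1))] with u hu1 hu
  have hu' : |u| < 1 := by
    rw [abs_of_pos hu.1]; exact lt_of_le_of_ne hu.2 (by simpa using hu1)
  exact ((hasSum_logOneAddDiv hu.1.ne' hu').congr_fun fun n => by simp [hF]; ring).tsum_eq.symm

lemma logOneAddDiv_eq_log_div_add_inv {u : ℝ} (hu : 0 < u) :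
    logOneAddDiv u = Real.log u / u + logOneAddDiv u⁻¹ / u ^ 2 := by
  have h : 1 + u⁻¹ = (1 + u) / u := by field_simp; ring
  rw [logOneAddDiv, logOneAddDiv, h, Real.log_div (by positivity) hu.ne']
  field_simp
  ring

lemma pos_of_mem_uIcc_one {x u : ℝ} (hx : 0 < x) (hu : u ∈ uIcc 1 x) : 0 < u :=
  lt_of_lt_of_le (lt_min one_pos hx) hu.1

lemma intervalIntegrable_log_div_self {x : ℝ} (hx : 0 < x) :
    IntervalIntegrable (fun u => Real.log u / u) volume 1 x :=
  ContinuousOn.intervalIntegrable fun _ hu =>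
    have hu0 := (pos_of_mem_uIcc_one hx hu).ne'
    ((Real.continuousAt_log hu0).div continuousAt_id hu0).continuousWithinAt

lemma integral_log_div_self {x : ℝ} (hx : 0 < x) :
    ∫ u in (1:ℝ)..x, Real.log u / u = Real.log x ^ 2 / 2 := by
  have hderiv : ∀ u ∈ uIcc 1 x, HasDerivAt (fun u => Real.log u ^ 2 / 2) (Real.log u / u) u :=
    fun u hu => by
      have hlog := Real.hasDerivAt_log (pos_of_mem_uIcc_one hx hu).ne'
      refine ((hlog.pow 2).div_const 2).congr_deriv ?_
      field_simp
      norm_num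
  rw [integral_eq_sub_of_hasDerivAt hderiv (intervalIntegrable_log_div_self hx)]
  simp

lemma integral_logOneAddDiv_inv_div_sq {x : ℝ} (hx : 0 < x) :
    ∫ u in (1:ℝ)..x, logOneAddDiv u⁻¹ / u ^ 2 = ∫ v in x⁻¹..1, logOneAddDiv v := by
  have hpos : ∀ u ∈ uIcc 1 x, 0 < u := fun _ => pos_of_mem_uIcc_one hx
  have h := integral_deriv_smul_comp' (a := 1) (b := x) (g := logOneAddDiv)
    (fun u hu => hasDerivAt_inv (hpos u hu).ne')
    (ContinuousOn.neg <| ContinuousOn.inv₀ (by fun_prop) fun u hu => pow_ne_zero 2 (hpos u hu).ne')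
    (continuousOn_logOneAddDiv.mono <| by rintro _ ⟨u, hu, rfl⟩; exact inv_pos.2 (hpos u hu))
  rw [inv_one] at h
  rw [integral_symm 1 x⁻¹, ← h, ← intervalIntegral.integral_neg]
  refine integral_congr fun u _ => ?_
  simp [div_eq_mul_inv, mul_comm]

lemma intervalIntegrable_logOneAddDiv_inv_div_sq {x : ℝ} (hx : 0 < x) :
    IntervalIntegrable (fun u => logOneAddDiv u⁻¹ / u ^ 2) volume 1 x := by
  have hpos : ∀ u ∈ uIcc 1 x, 0 < u := fun _ => pos_of_mem_uIcc_one hx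
  refine ContinuousOn.intervalIntegrable <|
    (continuousOn_logOneAddDiv.comp (continuousOn_inv₀.mono fun u hu => (hpos u hu).ne')
      fun u hu => inv_pos.2 (hpos u hu)).div (continuousOn_pow 2)
      fun u hu => pow_ne_zero 2 (hpos u hu).ne'

lemma integral_logOneAddDiv_inversion {x : ℝ} (hx : 0 < x) :
    ∫ u in (0:ℝ)..x, logOneAddDiv u
      = π ^ 2 / 6 + Real.log x ^ 2 / 2 - ∫ u in (0:ℝ)..x⁻¹, logOneAddDiv u := by
  have hsplit : ∫ u in (1:ℝ)..x, logOneAddDiv u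
      = (∫ u in (1:ℝ)..x, Real.log u / u) + ∫ u in (1:ℝ)..x, logOneAddDiv u⁻¹ / u ^ 2 := by
    rw [← intervalIntegral.integral_add (intervalIntegrable_log_div_self hx)
      (intervalIntegrable_logOneAddDiv_inv_div_sq hx)]
    exact integral_congr fun u hu =>
      logOneAddDiv_eq_log_div_add_inv (pos_of_mem_uIcc_one hx hu)
  have h0x := integral_add_adjacent_intervals (intervalIntegrable_logOneAddDiv le_rfl zero_le_one)
    (intervalIntegrable_logOneAddDiv zero_le_one hx.le)
  have h01 := integral_add_adjacent_intervals
    (intervalIntegrable_logOneAddDiv le_rfl (inv_pos.2 hx).le)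
    (intervalIntegrable_logOneAddDiv (inv_pos.2 hx).le zero_le_one)
  rw [integral_logOneAddDiv_zero_one] at h0x h01
  rw [← h0x, hsplit, integral_log_div_self hx, integral_logOneAddDiv_inv_div_sq hx]
  linarith

lemma integral_log_one_add_mul_div (x : ℝ) :
    ∫ t in (0:ℝ)..1, Real.log (1 + t * x) / t = ∫ u in (0:ℝ)..x, logOneAddDiv u := by
  have h : ∀ t, Real.log (1 + t * x) / t = x * logOneAddDiv (x * t) := fun t => by
    rcases eq_or_ne t 0 with rfl | ht
    · simp [logOneAddDiv]
    rcases eq_or_ne x 0 with rfl | hx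
    · simp
    rw [logOneAddDiv]
    field_simp
  simp_rw [h, intervalIntegral.integral_const_mul]
  simp

lemma dilog_neg_ofReal {x : ℝ} (hx : -1 ≤ x) :
    dilog (-(x : ℂ)) = ((-∫ u in (0:ℝ)..x, logOneAddDiv u : ℝ) : ℂ) := by
  rw [dilog, ofReal_neg, ← integral_log_one_add_mul_div, ← intervalIntegral.integral_ofReal]
  congr 1
  refine integral_congr fun t ht => ?_
  rw [uIcc_of_le zero_le_one] at ht
  have hpos : 0 ≤ 1 + t * x := by nlinarith [ht.1, ht.2]
  rw [ofReal_div, ofReal_log hpos, mul_neg, sub_neg_eq_add]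
  push_cast
  rfl

theorem dilog_neg_asymptotic (x : ℝ) (hx : 1 ≤ x) :
    ∃ ε : ℝ, |ε| ≤ Real.pi ^ 2 / (6 * x) ∧
      dilog (-(x : ℂ)) =
        ((-(Real.pi ^ 2) / 6 - (1 / 2) * (Real.log x) ^ 2 + ε : ℝ) : ℂ) := by
  have hx0 : 0 < x := by linarith
  have hix0 : 0 ≤ x⁻¹ := inv_nonneg.2 hx0.le
  refine ⟨∫ u in (0:ℝ)..x⁻¹, logOneAddDiv u, ?_, ?_⟩
  · rw [abs_of_nonneg (integral_logOneAddDiv_nonneg hix0)]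
    calc ∫ u in (0:ℝ)..x⁻¹, logOneAddDiv u ≤ x⁻¹ := integral_logOneAddDiv_le hix0
      _ = 6 / (6 * x) := by field_simp
      _ ≤ π ^ 2 / (6 * x) := by gcongr; nlinarith [pi_gt_three]
  · rw [dilog_neg_ofReal (by linarith), integral_logOneAddDiv_inversion hx0]
    push_cast
    ring
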